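/- (Theorem 1, strictness characterization) For 1 ≤ K < N, the inequality E[min{μ̂^B_{a_K*}, μ̂*_SE}] ≥ E[min{μ̂^B_{a_{K+1}*}, μ̂*_SE}] is strict if and only if P(μ̂*_SE > μ̂^B_{a_K*} > μ̂^B_{a_{K+1}*}) > 0 or P(μ̂^B_{a_K*} ≥ μ̂*_SE > μ̂^B_{a_{K+1}*}) > 0. -/

import Mathlib

open MeasureTheory ProbabilityTheory Finset

noncomputable section

/-- The (random) set `M_K` of indices whose `B`-value is among the `K` largest values
among `B 1 ω, …, B N ω`: an index belongs to it iff fewer than `K` indices have a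
strictly larger `B`-value. -/
def topK {Ω : Type*} {N : ℕ} (B : Fin N → Ω → ℝ) (K : ℕ) (ω : Ω) : Finset (Fin N) :=
  Finset.univ.filter fun i => (Finset.univ.filter fun j => B i ω < B j ω).card < K

/-- An element of the finite set `s` at which `f` is maximal over `s`. -/
def argmaxOn {α : Type*} [Nonempty α] (f : α → ℝ) (s : Finset α) : α :=
  if h : s.Nonempty then (s.exists_max_image f h).choose else Classical.arbitrary α

/-- `a_K*`: the index of `M_K` at which `i ↦ A i ω` is maximal over `M_K`. -/
def aK {Ω : Type*} {N : ℕ} [NeZero N] (A B : Fin N → Ω → ℝ) (K : ℕ) (ω : Ω) : Fin N :=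
  argmaxOn (fun i => A i ω) (topK B K ω)

/-- `a*`: the index at which `i ↦ A i ω` is maximal over all indices. -/
def aStar {Ω : Type*} {N : ℕ} [NeZero N] (A : Fin N → Ω → ℝ) (ω : Ω) : Fin N :=
  argmaxOn (fun i => A i ω) Finset.univ

/-- The pointwise maximum `max_{1 ≤ i ≤ N} C i ω` (e.g. the single estimator `μ̂*_SE`). -/
def maxOf {Ω : Type*} {N : ℕ} [NeZero N] (C : Fin N → Ω → ℝ) (ω : Ω) : ℝ :=
  Finset.univ.sup' Finset.univ_nonempty fun i => C i ω

/-- `a_(j)`: the index carrying the `j`-th largest value among `B 1 ω, …, B N ω`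
(exactly `j - 1` indices have a strictly larger value). -/
def rankIdx {Ω : Type*} {N : ℕ} [NeZero N] (B : Fin N → Ω → ℝ) (j : ℕ) (ω : Ω) : Fin N :=
  if h : ∃ i, (Finset.univ.filter fun k => B i ω < B k ω).card = j - 1 then h.choose
  else Classical.arbitrary (Fin N)

end

section Aux

variable {Ω : Type*} {N : ℕ}

lemma argmaxOn_spec {α : Type*} [Nonempty α] (f : α → ℝ) (s : Finset α) (h : s.Nonempty) :
    argmaxOn f s ∈ s ∧ ∀ j ∈ s, f j ≤ f (argmaxOn f s) := by
  rw [argmaxOn, dif_pos h]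
  obtain ⟨hmem, hle⟩ := (s.exists_max_image f h).choose_spec
  exact ⟨hmem, hle⟩

lemma topK_nonempty [NeZero N] (B : Fin N → Ω → ℝ) {K : ℕ} (hK : 1 ≤ K) (ω : Ω) :
    (topK B K ω).Nonempty := by
  obtain ⟨i0, -, hi0⟩ := Finset.exists_max_image Finset.univ (fun i => B i ω)
    Finset.univ_nonempty
  refine ⟨i0, ?_⟩
  simp only [topK, Finset.mem_filter, Finset.mem_univ, true_and]
  have : (Finset.univ.filter fun j => B i0 ω < B j ω) = ∅ := by
    apply Finset.filter_false_of_mem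
    intro j _
    exact not_lt.2 (hi0 j (Finset.mem_univ j))
  rw [this]
  simpa using (show 0 < K by omega)

lemma topK_mono (B : Fin N → Ω → ℝ) (K : ℕ) (ω : Ω) :
    topK B K ω ⊆ topK B (K + 1) ω := by
  intro i hi
  simp only [topK, Finset.mem_filter, Finset.mem_univ, true_and] at hi ⊢
  omega

/-- Key monotonicity: the `B`-value picked with `K+1` candidates is at most the one with
`K` candidates, assuming the `A`-values are injective at `ω`. -/
lemma b_aK_mono [NeZero N] (A B : Fin N → Ω → ℝ) {K : ℕ} (hK : 1 ≤ K) (ω : Ω)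
    (hinj : Function.Injective fun i => A i ω) :
    B (aK A B (K + 1) ω) ω ≤ B (aK A B K ω) ω := by
  set a := aK A B K ω with ha
  set a' := aK A B (K + 1) ω with ha'
  obtain ⟨haMem, haMax⟩ := argmaxOn_spec (fun i => A i ω) (topK B K ω) (topK_nonempty B hK ω)
  obtain ⟨ha'Mem, ha'Max⟩ := argmaxOn_spec (fun i => A i ω) (topK B (K + 1) ω)
    (topK_nonempty B (by omega) ω)
  by_cases hcase : a' ∈ topK B K ω
  · have h1 : A a' ω ≤ A a ω := haMax a' hcase
    have h2 : A a ω ≤ A a' ω := ha'Max a (topK_mono B K ω haMem)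
    have : a = a' := hinj (le_antisymm h2 h1)
    rw [this]
  · by_contra hlt
    push_neg at hlt
    -- B a ω < B a' ω, so the set of indices above a' is contained in the set above a
    have hsub : (Finset.univ.filter fun j => B a' ω < B j ω) ⊆
        (Finset.univ.filter fun j => B a ω < B j ω) := by
      intro j hj
      simp only [Finset.mem_filter, Finset.mem_univ, true_and] at hj ⊢
      exact lt_trans hlt hj
    have hcard : (Finset.univ.filter fun j => B a ω < B j ω).card < K := by
      have := haMem
      exact (Finset.mem_filter.mp this).2
    have : (Finset.univ.filter fun j => B a' ω < B j ω).card < K :=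
      lt_of_le_of_lt (Finset.card_le_card hsub) hcard
    exact hcase (by simp only [topK, Finset.mem_filter, Finset.mem_univ, true_and]; exact this)

/-- The count of indices with strictly larger `B`-value, as a measurable function. -/
lemma measurable_cnt [MeasurableSpace Ω] (B : Fin N → Ω → ℝ) (hB : ∀ i, Measurable (B i))
    (i : Fin N) :
    Measurable fun ω => (Finset.univ.filter fun j => B i ω < B j ω).card := by
  have : (fun ω => (Finset.univ.filter fun j => B i ω < B j ω).card)
      = fun ω => ∑ j : Fin N, if B i ω < B j ω then 1 else 0 := by
    funext ω
    rw [Finset.card_filter]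
  rw [this]
  apply Finset.measurable_sum
  intro j _
  exact Measurable.ite (measurableSet_lt (hB i) (hB j)) measurable_const measurable_const

/-- The "selection" set where index `i` is the (strict) argmax over `topK`. -/
def selSet [MeasurableSpace Ω] (A B : Fin N → Ω → ℝ) (K : ℕ) (i : Fin N) : Set Ω :=
  {ω | i ∈ topK B K ω ∧ ∀ j, j ∈ topK B K ω → j ≠ i → A j ω < A i ω}

lemma measurableSet_selSet [MeasurableSpace Ω] (A B : Fin N → Ω → ℝ)
    (hA : ∀ i, Measurable (A i)) (hB : ∀ i, Measurable (B i)) (K : ℕ) (i : Fin N) :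
    MeasurableSet (selSet A B K i) := by
  have hmemTop : ∀ k : Fin N, MeasurableSet {ω : Ω | k ∈ topK B K ω} := by
    intro k
    have : {ω : Ω | k ∈ topK B K ω}
        = (fun ω => (Finset.univ.filter fun j => B k ω < B j ω).card) ⁻¹' {n | n < K} := by
      ext ω
      simp [topK]
    rw [this]
    exact measurable_cnt B hB k MeasurableSet.of_discrete
  have : selSet A B K i = {ω : Ω | i ∈ topK B K ω} ∩
      ⋂ j : Fin N, ({ω : Ω | j ∈ topK B K ω}ᶜ ∪ {ω : Ω | j ≠ i → A j ω < A i ω}) := by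
    ext ω
    simp only [selSet, Set.mem_setOf_eq, Set.mem_inter_iff, Set.mem_iInter, Set.mem_union,
      Set.mem_compl_iff]
    constructor
    · rintro ⟨h1, h2⟩
      refine ⟨h1, fun j => ?_⟩
      by_cases hj : j ∈ topK B K ω
      · exact Or.inr (h2 j hj)
      · exact Or.inl hj
    · rintro ⟨h1, h2⟩
      refine ⟨h1, fun j hj hji => ?_⟩
      rcases h2 j with h | h
      · exact absurd hj h
      · exact h hji
  rw [this]
  refine (hmemTop i).inter (MeasurableSet.iInter fun j => ((hmemTop j).compl.union ?_))
  by_cases hji : j = i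
  · have : {ω : Ω | j ≠ i → A j ω < A i ω} = Set.univ := by
      ext ω; simp [hji]
    rw [this]; exact MeasurableSet.univ
  · have : {ω : Ω | j ≠ i → A j ω < A i ω} = {ω : Ω | A j ω < A i ω} := by
      ext ω; simp [hji]
    rw [this]
    exact measurableSet_lt (hA j) (hA i)

/-- On points where `A · ω` is injective, the composed value `B (aK …) ω` agrees with a
measurable function. -/
lemma aK_comp_eq [MeasurableSpace Ω] [NeZero N] (A B : Fin N → Ω → ℝ) {K : ℕ} (hK : 1 ≤ K)
    (ω : Ω) (hinj : Function.Injective fun i => A i ω) :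
    B (aK A B K ω) ω = ∑ i : Fin N, Set.indicator (selSet A B K i) (B i) ω := by
  obtain ⟨haMem, haMax⟩ := argmaxOn_spec (fun i => A i ω) (topK B K ω) (topK_nonempty B hK ω)
  set a := aK A B K ω with ha
  have hsel : ω ∈ selSet A B K a := by
    refine ⟨haMem, fun j hj hji => ?_⟩
    rcases lt_or_eq_of_le (haMax j hj) with h | h
    · exact h
    · exact absurd (hinj h) hji
  rw [Finset.sum_eq_single_of_mem a (Finset.mem_univ a)]
  · rw [Set.indicator_of_mem hsel]
  · intro i _ hia
    rw [Set.indicator_of_notMem]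
    intro hi
    have h1 : A a ω < A i ω := hi.2 a haMem (by exact fun h => hia h.symm)
    have h2 : A i ω < A a ω := hsel.2 i hi.1 hia
    exact absurd (lt_trans h1 h2) (lt_irrefl _)

lemma aK_comp_aestronglyMeasurable [MeasurableSpace Ω] [NeZero N] (P : Measure Ω)
    (A B : Fin N → Ω → ℝ) (hA : ∀ i, Measurable (A i)) (hB : ∀ i, Measurable (B i))
    {K : ℕ} (hK : 1 ≤ K) (hAdist : ∀ᵐ ω ∂P, Function.Injective fun i => A i ω) :
    AEStronglyMeasurable (fun ω => B (aK A B K ω) ω) P := by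
  have hg : Measurable fun ω => ∑ i : Fin N, Set.indicator (selSet A B K i) (B i) ω := by
    apply Finset.measurable_sum
    intro i _
    exact (hB i).indicator (measurableSet_selSet A B hA hB K i)
  refine hg.aestronglyMeasurable.congr ?_
  filter_upwards [hAdist] with ω hinj
  exact (aK_comp_eq A B hK ω hinj).symm

lemma aK_comp_integrable [MeasurableSpace Ω] [NeZero N] (P : Measure Ω)
    (A B : Fin N → Ω → ℝ) (hA : ∀ i, Measurable (A i)) (hB : ∀ i, Measurable (B i))
    (hBint : ∀ i, Integrable (B i) P)
    {K : ℕ} (hK : 1 ≤ K) (hAdist : ∀ᵐ ω ∂P, Function.Injective fun i => A i ω) :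
    Integrable (fun ω => B (aK A B K ω) ω) P := by
  have hbound : Integrable (fun ω => ∑ i : Fin N, |B i ω|) P :=
    integrable_finset_sum _ fun i _ => (hBint i).abs
  refine hbound.mono' (aK_comp_aestronglyMeasurable P A B hA hB hK hAdist) ?_
  filter_upwards with ω
  rw [Real.norm_eq_abs]
  exact Finset.single_le_sum (f := fun i => |B i ω|) (fun i _ => abs_nonneg _)
    (Finset.mem_univ _)

lemma maxOf_measurable [MeasurableSpace Ω] [NeZero N] (C : Fin N → Ω → ℝ)
    (hC : ∀ i, Measurable (C i)) : Measurable (maxOf C) := by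
  have : maxOf C = Finset.univ.sup' Finset.univ_nonempty C := by
    funext ω
    rw [maxOf, Finset.sup'_apply]
  rw [this]
  exact Finset.measurable_sup' _ fun i _ => hC i

lemma maxOf_integrable [MeasurableSpace Ω] [NeZero N] (P : Measure Ω) (C : Fin N → Ω → ℝ)
    (hC : ∀ i, Measurable (C i)) (hCint : ∀ i, Integrable (C i) P) :
    Integrable (maxOf C) P := by
  have hbound : Integrable (fun ω => ∑ i : Fin N, |C i ω|) P :=
    integrable_finset_sum _ fun i _ => (hCint i).abs
  refine hbound.mono' (maxOf_measurable C hC).aestronglyMeasurable ?_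
  filter_upwards with ω
  rw [Real.norm_eq_abs]
  obtain ⟨i, -, hi⟩ := Finset.exists_mem_eq_sup' (Finset.univ_nonempty (α := Fin N))
    (fun i => C i ω)
  rw [maxOf, hi]
  calc |C i ω| ≤ ∑ j : Fin N, |C j ω| :=
    Finset.single_le_sum (f := fun j => |C j ω|) (fun j _ => abs_nonneg _) (Finset.mem_univ i)

lemma min_lt_min_iff' (x y m : ℝ) :
    min x m < min y m ↔ (y < m ∧ x < y) ∨ (m ≤ y ∧ x < m) := by
  constructor
  · intro h
    have hxm : x < m := by
      by_contra hc
      push_neg at hc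
      rw [min_eq_right hc] at h
      exact absurd (lt_of_lt_of_le h (min_le_right _ _)) (lt_irrefl _)
    have hxy : x < y := by
      rw [min_eq_left hxm.le] at h
      exact lt_of_lt_of_le h (min_le_left _ _)
    rcases lt_or_ge y m with hy | hy
    · exact Or.inl ⟨hy, hxy⟩
    · exact Or.inr ⟨hy, hxm⟩
  · rintro (⟨h1, h2⟩ | ⟨h1, h2⟩)
    · rw [min_eq_left h1.le]
      exact lt_of_le_of_lt (min_le_left _ _) h2
    · rw [min_eq_right h1]
      exact lt_of_le_of_lt (min_le_left _ _) h2

lemma integral_lt_integral_iff_pos {Ω : Type*} [MeasurableSpace Ω] (P : Measure Ω)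
    (f g : Ω → ℝ) (hf : Integrable f P) (hg : Integrable g P) (hle : f ≤ᵐ[P] g) :
    (∫ ω, f ω ∂P < ∫ ω, g ω ∂P) ↔ 0 < P {ω | f ω < g ω} := by
  rw [← sub_pos, ← integral_sub hg hf]
  have key := integral_pos_iff_support_of_nonneg_ae
    (f := g - f) (μ := P) (by filter_upwards [hle] with ω h; simp [h]) (hg.sub hf)
  simp only [Pi.sub_apply] at key
  rw [key]
  have : Function.support (g - f) =ᵐ[P] {ω | f ω < g ω} := by
    rw [Filter.eventuallyEq_set]
    filter_upwards [hle] with ω h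
    simp only [Function.mem_support, Pi.sub_apply, Set.mem_setOf_eq]
    constructor
    · intro hne; rcases lt_or_eq_of_le h with h' | h'
      · exact h'
      · exact absurd (by rw [h']; ring) hne
    · intro hlt; intro heq; linarith [sub_eq_zero.mp heq]
  rw [measure_congr this]

end Aux

theorem stmt6 {Ω : Type*} [MeasurableSpace Ω] (P : MeasureTheory.Measure Ω)
    [MeasureTheory.IsProbabilityMeasure P]
    (N : ℕ) [NeZero N] (hN : 2 ≤ N)
    (A B C : Fin N → Ω → ℝ)
    (hAmeas : ∀ i, Measurable (A i)) (hBmeas : ∀ i, Measurable (B i))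
    (hCmeas : ∀ i, Measurable (C i))
    (hAint : ∀ i, MeasureTheory.Integrable (A i) P)
    (hBint : ∀ i, MeasureTheory.Integrable (B i) P)
    (hCint : ∀ i, MeasureTheory.Integrable (C i) P)
    (hAdist : ∀ᵐ ω ∂P, Function.Injective fun i => A i ω)
    (hBdist : ∀ᵐ ω ∂P, Function.Injective fun i => B i ω)
    :
    ∀ K, 1 ≤ K → K < N →
      ((∫ ω, min (B (aK A B (K + 1) ω) ω) (maxOf C ω) ∂P <
          ∫ ω, min (B (aK A B K ω) ω) (maxOf C ω) ∂P) ↔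
        (0 < P {ω | B (aK A B K ω) ω < maxOf C ω ∧
                    B (aK A B (K + 1) ω) ω < B (aK A B K ω) ω} ∨
         0 < P {ω | maxOf C ω ≤ B (aK A B K ω) ω ∧
                    B (aK A B (K + 1) ω) ω < maxOf C ω})) := by
  intro K hK1 hKN
  set x : Ω → ℝ := fun ω => B (aK A B (K + 1) ω) ω with hx
  set y : Ω → ℝ := fun ω => B (aK A B K ω) ω with hy
  set m : Ω → ℝ := maxOf C with hm
  have hxint : Integrable x P := aK_comp_integrable P A B hAmeas hBmeas hBint (by omega) hAdist
  have hyint : Integrable y P := aK_comp_integrable P A B hAmeas hBmeas hBint hK1 hAdist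
  have hmint : Integrable m P := maxOf_integrable P C hCmeas hCint
  have hfint : Integrable (fun ω => min (x ω) (m ω)) P := by
    have := hxint.inf hmint
    exact this
  have hgint : Integrable (fun ω => min (y ω) (m ω)) P := by
    have := hyint.inf hmint
    exact this
  have hle : (fun ω => min (x ω) (m ω)) ≤ᵐ[P] (fun ω => min (y ω) (m ω)) := by
    filter_upwards [hAdist] with ω hinj
    exact min_le_min (b_aK_mono A B hK1 ω hinj) le_rfl
  rw [integral_lt_integral_iff_pos P _ _ hfint hgint hle]
  have hsets : {ω | min (x ω) (m ω) < min (y ω) (m ω)}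
      = {ω | y ω < m ω ∧ x ω < y ω} ∪ {ω | m ω ≤ y ω ∧ x ω < m ω} := by
    ext ω
    simp only [Set.mem_setOf_eq, Set.mem_union]
    exact min_lt_min_iff' (x ω) (y ω) (m ω)
  rw [hsets]
  constructor
  · intro h
    by_contra hcon
    push_neg at hcon
    obtain ⟨h1, h2⟩ := hcon
    have h1' : P {ω | y ω < m ω ∧ x ω < y ω} = 0 := le_antisymm h1 zero_le
    have h2' : P {ω | m ω ≤ y ω ∧ x ω < m ω} = 0 := le_antisymm h2 zero_le
    have : P ({ω | y ω < m ω ∧ x ω < y ω} ∪ {ω | m ω ≤ y ω ∧ x ω < m ω}) = 0 :=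
      measure_union_null h1' h2'
    rw [this] at h
    exact lt_irrefl _ h
  · rintro (h | h)
    · exact lt_of_lt_of_le h (measure_mono Set.subset_union_left)
    · exact lt_of_lt_of_le h (measure_mono Set.subset_union_right)
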